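/- arXiv:2405.02341 — 4 statements merged into one kernel-verified Lean document; each statement's English description precedes it below -/
import Mathlib

section
/- Let σ > 0, γ ∈ [0,1], κ ∈ ℝ, and let α ≥ 2 be an integer. Then the Rényi divergence of order α between the mixture γ·N(κ, σ²) + (1−γ)·N(0, σ²) and N(0, σ²) satisfies the exact identity D_α( γ·N(κ,σ²) + (1−γ)·N(0,σ²) ‖ N(0,σ²) ) = (1/(α−1)) · log( Σ_{ℓ=0}^{α} C(α,ℓ) · (1−γ)^{α−ℓ} · γ^ℓ · exp( ℓ(ℓ−1)·κ² / (2σ²) ) ), where C(α,ℓ) is the binomial coefficient. -/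
open MeasureTheory ProbabilityTheory Real
open scoped ENNReal NNReal Classical

/-- Rényi divergence of order `a` between measures `μ` and `ν`:
`(a-1)⁻¹ * log ∫ (dμ/dν)^a dν`, set to `⊤` when `μ` is not absolutely
continuous with respect to `ν`. -/
noncomputable def renyiDiv {E : Type*} [MeasurableSpace E] (a : ℝ) (μ ν : Measure E) : EReal :=
  if μ ≪ ν then (((a - 1)⁻¹ : ℝ) : EReal) * ENNReal.log (∫⁻ x, (μ.rnDeriv ν x) ^ a ∂ν)
  else ⊤

/-!
The likelihood ratio of `N(κ, v)` with respect to `N(0, v)` is `L x = exp (κ x / v - κ² / (2 v))`,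
so the mixture has density `γ L + (1 - γ)` with respect to `N(0, v)`. Expanding its `α`-th power
binomially reduces the Rényi integral to the moments `∫ L^ℓ dN(0, v)`, which the Gaussian moment
generating function evaluates to `exp (ℓ (ℓ - 1) κ² / (2 v))`.
-/

namespace MeasureTheory

lemma smul_withDensity_add_smul {X : Type*} [MeasurableSpace X] (ν : Measure X)
    {f : X → ℝ≥0∞} (hf : Measurable f) (a b : ℝ≥0∞) :
    a • ν.withDensity f + b • ν = ν.withDensity fun x ↦ a * f x + b := by
  rw [← withDensity_smul _ hf, ← withDensity_const, ← withDensity_add_left (hf.const_smul a)]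
  rfl

lemma lintegral_mul_add_pow {X : Type*} [MeasurableSpace X] (ν : Measure X)
    {f : X → ℝ≥0∞} (hf : Measurable f) (a b : ℝ≥0∞) (n : ℕ) :
    ∫⁻ x, (a * f x + b) ^ n ∂ν =
      ∑ k ∈ Finset.range (n + 1), n.choose k * b ^ (n - k) * a ^ k * ∫⁻ x, f x ^ k ∂ν := by
  simp_rw [add_pow]
  rw [lintegral_finsetSum _ fun k _ ↦ by fun_prop]
  refine Finset.sum_congr rfl fun k _ ↦ ?_
  rw [← lintegral_const_mul _ (by fun_prop)]
  congr 1
  funext x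
  ring

end MeasureTheory

lemma one_le_sum_choose_mul {γ : ℝ} (hγ0 : 0 ≤ γ) (hγ1 : γ ≤ 1) (n : ℕ) {w : ℕ → ℝ}
    (hw : ∀ k, 1 ≤ w k) :
    1 ≤ ∑ k ∈ Finset.range (n + 1), (n.choose k : ℝ) * (1 - γ) ^ (n - k) * γ ^ k * w k := by
  have hγ1' : 0 ≤ 1 - γ := sub_nonneg.mpr hγ1
  calc (1 : ℝ) = (γ + (1 - γ)) ^ n := by ring
    _ = ∑ k ∈ Finset.range (n + 1), (n.choose k : ℝ) * (1 - γ) ^ (n - k) * γ ^ k := by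
        rw [add_pow]
        exact Finset.sum_congr rfl fun k _ ↦ by ring
    _ ≤ _ := Finset.sum_le_sum fun k _ ↦ le_mul_of_one_le_right
        (mul_nonneg (mul_nonneg (Nat.cast_nonneg _) (pow_nonneg hγ1' _)) (pow_nonneg hγ0 _)) (hw k)

namespace ProbabilityTheory

noncomputable def gaussianLikelihoodRatio (m : ℝ) (v : ℝ≥0) (x : ℝ) : ℝ :=
  rexp (m / v * x - m ^ 2 / (2 * v))

lemma gaussianPDFReal_eq_mul_gaussianLikelihoodRatio (m : ℝ) {v : ℝ≥0} (hv : v ≠ 0) (x : ℝ) :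
    gaussianPDFReal m v x = gaussianPDFReal 0 v x * gaussianLikelihoodRatio m v x := by
  have hv' : (v : ℝ) ≠ 0 := NNReal.coe_ne_zero.mpr hv
  simp only [gaussianPDFReal, gaussianLikelihoodRatio, mul_assoc, ← Real.exp_add]
  congr 2
  field_simp
  ring

lemma gaussianReal_eq_withDensity_gaussianLikelihoodRatio (m : ℝ) {v : ℝ≥0} (hv : v ≠ 0) :
    gaussianReal m v =
      (gaussianReal 0 v).withDensity fun x ↦ ENNReal.ofReal (gaussianLikelihoodRatio m v x) := by
  rw [gaussianReal_of_var_ne_zero m hv, gaussianReal_of_var_ne_zero 0 hv,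
    ← withDensity_mul _ (measurable_gaussianPDF _ _) (by unfold gaussianLikelihoodRatio; fun_prop)]
  congr 1
  funext x
  simp only [Pi.mul_apply, gaussianPDF]
  rw [← ENNReal.ofReal_mul (gaussianPDFReal_nonneg _ _ _),
    gaussianPDFReal_eq_mul_gaussianLikelihoodRatio m hv]

lemma lintegral_ofReal_exp_mul_gaussianReal (m : ℝ) (v : ℝ≥0) (t : ℝ) :
    ∫⁻ x, ENNReal.ofReal (rexp (t * x)) ∂gaussianReal m v =
      ENNReal.ofReal (rexp (m * t + v * t ^ 2 / 2)) := by
  rw [← ofReal_integral_eq_lintegral_ofReal (integrable_exp_mul_gaussianReal t)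
    (ae_of_all _ fun x ↦ (Real.exp_pos _).le)]
  exact congrArg ENNReal.ofReal (congrFun mgf_fun_id_gaussianReal t)

lemma lintegral_gaussianLikelihoodRatio_pow (m : ℝ) {v : ℝ≥0} (hv : v ≠ 0) (n : ℕ) :
    ∫⁻ x, ENNReal.ofReal (gaussianLikelihoodRatio m v x) ^ n ∂gaussianReal 0 v =
      ENNReal.ofReal (rexp (n * (n - 1) * m ^ 2 / (2 * v))) := by
  have hv' : (v : ℝ) ≠ 0 := NNReal.coe_ne_zero.mpr hv
  have hpow (x : ℝ) : ENNReal.ofReal (gaussianLikelihoodRatio m v x) ^ n =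
      ENNReal.ofReal (rexp (-(n * m ^ 2 / (2 * v)))) * ENNReal.ofReal (rexp (n * m / v * x)) := by
    rw [gaussianLikelihoodRatio, ← ENNReal.ofReal_pow (Real.exp_pos _).le,
      ← ENNReal.ofReal_mul (Real.exp_pos _).le, ← Real.exp_nat_mul, ← Real.exp_add]
    ring_nf
  simp_rw [hpow]
  rw [lintegral_const_mul _ (by fun_prop), lintegral_ofReal_exp_mul_gaussianReal,
    ← ENNReal.ofReal_mul (Real.exp_pos _).le, ← Real.exp_add]
  congr 2
  field_simp
  ring

lemma lintegral_mixture_gaussianLikelihoodRatio_pow (m : ℝ) {v : ℝ≥0} (hv : v ≠ 0)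
    {γ : ℝ} (hγ0 : 0 ≤ γ) (hγ1 : γ ≤ 1) (n : ℕ) :
    ∫⁻ x, (ENNReal.ofReal γ * ENNReal.ofReal (gaussianLikelihoodRatio m v x) +
        ENNReal.ofReal (1 - γ)) ^ n ∂gaussianReal 0 v =
      ENNReal.ofReal (∑ k ∈ Finset.range (n + 1), (n.choose k : ℝ) * (1 - γ) ^ (n - k) * γ ^ k *
        rexp (k * (k - 1) * m ^ 2 / (2 * v))) := by
  have hγ1' : 0 ≤ 1 - γ := sub_nonneg.mpr hγ1
  rw [lintegral_mul_add_pow _ (by unfold gaussianLikelihoodRatio; fun_prop),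
    ENNReal.ofReal_sum_of_nonneg fun k _ ↦ by positivity]
  refine Finset.sum_congr rfl fun k _ ↦ ?_
  rw [lintegral_gaussianLikelihoodRatio_pow m hv, ENNReal.ofReal_mul (by positivity),
    ENNReal.ofReal_mul (by positivity), ENNReal.ofReal_mul (Nat.cast_nonneg _),
    ENNReal.ofReal_natCast, ENNReal.ofReal_pow hγ0, ENNReal.ofReal_pow hγ1']

end ProbabilityTheory

theorem renyi_div_sparsified_gaussian_one_dim_general
    (σ γ κ : ℝ) (hσ : 0 < σ) (hγ0 : 0 ≤ γ) (hγ1 : γ ≤ 1)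
    (α : ℕ) :
    renyiDiv (α : ℝ)
      (ENNReal.ofReal γ • gaussianReal κ (Real.toNNReal (σ ^ 2)) +
        ENNReal.ofReal (1 - γ) • gaussianReal 0 (Real.toNNReal (σ ^ 2)))
      (gaussianReal 0 (Real.toNNReal (σ ^ 2))) =
    ((((α : ℝ) - 1)⁻¹ * Real.log (∑ ℓ ∈ Finset.range (α + 1),
        (α.choose ℓ : ℝ) * (1 - γ) ^ (α - ℓ) * γ ^ ℓ *
          Real.exp ((ℓ : ℝ) * ((ℓ : ℝ) - 1) * κ ^ 2 / (2 * σ ^ 2))) : ℝ) : EReal) := by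
  set v := Real.toNNReal (σ ^ 2)
  have hv : v ≠ 0 := by simpa [v] using hσ.ne'
  have hvσ : (v : ℝ) = σ ^ 2 := Real.coe_toNNReal _ (sq_nonneg σ)
  set f : ℝ → ℝ≥0∞ := fun x ↦
    ENNReal.ofReal γ * ENNReal.ofReal (gaussianLikelihoodRatio κ v x) + ENNReal.ofReal (1 - γ)
  have hmix : ENNReal.ofReal γ • gaussianReal κ v + ENNReal.ofReal (1 - γ) • gaussianReal 0 v =
      (gaussianReal 0 v).withDensity f := by
    rw [gaussianReal_eq_withDensity_gaussianLikelihoodRatio κ hv,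
      smul_withDensity_add_smul _ (by unfold gaussianLikelihoodRatio; fun_prop)]
  have hrn : ((gaussianReal 0 v).withDensity f).rnDeriv (gaussianReal 0 v) =ᵐ[gaussianReal 0 v] f :=
    Measure.rnDeriv_withDensity _ (by unfold f gaussianLikelihoodRatio; fun_prop)
  have hS : 1 ≤ ∑ ℓ ∈ Finset.range (α + 1), (α.choose ℓ : ℝ) * (1 - γ) ^ (α - ℓ) * γ ^ ℓ *
      rexp (ℓ * (ℓ - 1) * κ ^ 2 / (2 * σ ^ 2)) :=
    one_le_sum_choose_mul hγ0 hγ1 α fun ℓ ↦ Real.one_le_exp <| by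
      rcases ℓ with _ | ℓ
      · simp
      · push_cast
        rw [add_sub_cancel_right]
        positivity
  rw [renyiDiv, hmix, if_pos (withDensity_absolutelyContinuous _ _),
    lintegral_congr_ae (hrn.mono fun x hx ↦ by rw [hx, ENNReal.rpow_natCast]),
    lintegral_mixture_gaussianLikelihoodRatio_pow κ hv hγ0 hγ1, hvσ,
    ENNReal.log_ofReal_of_pos (by linarith), ← EReal.coe_mul]

theorem renyi_div_sparsified_gaussian_one_dim
    (σ γ κ : ℝ) (hσ : 0 < σ) (hγ0 : 0 ≤ γ) (hγ1 : γ ≤ 1)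
    (α : ℕ) (hα : 2 ≤ α) :
    renyiDiv (α : ℝ)
      (ENNReal.ofReal γ • gaussianReal κ (Real.toNNReal (σ ^ 2)) +
        ENNReal.ofReal (1 - γ) • gaussianReal 0 (Real.toNNReal (σ ^ 2)))
      (gaussianReal 0 (Real.toNNReal (σ ^ 2))) =
    ((((α : ℝ) - 1)⁻¹ * Real.log (∑ ℓ ∈ Finset.range (α + 1),
        (α.choose ℓ : ℝ) * (1 - γ) ^ (α - ℓ) * γ ^ ℓ *
          Real.exp ((ℓ : ℝ) * ((ℓ : ℝ) - 1) * κ ^ 2 / (2 * σ ^ 2))) : ℝ) : EReal) :=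
  renyi_div_sparsified_gaussian_one_dim_general σ γ κ hσ hγ0 hγ1 α
end

section
/- Fix an integer α ≥ 2, γ ∈ [0,1], σ > 0, and 0 < Δ_∞ ≤ Δ_2, and define F(u) = log( Σ_{ℓ=0}^{α} C(α,ℓ) · (1−γ)^{α−ℓ} · γ^ℓ · exp( ℓ(ℓ−1)·u / (2σ²) ) ). Then for every vector κ ∈ ℝ^d with ‖κ‖_2 ≤ Δ_2 and ‖κ‖_∞ ≤ Δ_∞, it holds that Σ_{j=1}^d F(κ_j²) ≤ (Δ_2² / Δ_∞²) · F(Δ_∞²). -/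
/-!
Write `F u = log (∑ ℓ, p ℓ * exp (c ℓ * u))` with binomial weights `p ℓ` summing to one and
`c ℓ = ℓ (ℓ - 1) / (2σ²) ≥ 0`. For `0 < θ ≤ 1`, concavity of `x ↦ x ^ θ` (Jensen) gives
`∑ p exp (c θ t) ≤ (∑ p exp (c t)) ^ θ`, i.e. `F (θ t) ≤ θ F t`. With `t = Δ∞²` and
`θ = κⱼ² / Δ∞²` this bounds each summand, and summing uses `∑ κⱼ² ≤ Δ₂²` together with `F t ≥ 0`.
-/

open Real Finset

section LogSumExp

variable {ι : Type*} {s : Finset ι} {p : ι → ℝ}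

lemma sum_mul_exp_pos (hp : ∀ i ∈ s, 0 ≤ p i) (hp1 : ∑ i ∈ s, p i = 1) (f : ι → ℝ) :
    0 < ∑ i ∈ s, p i * exp (f i) := by
  obtain ⟨i, hi, hpi⟩ := exists_ne_zero_of_sum_ne_zero (hp1 ▸ one_ne_zero : ∑ i ∈ s, p i ≠ 0)
  exact sum_pos' (fun j hj => mul_nonneg (hp j hj) (exp_pos _).le)
    ⟨i, hi, mul_pos (lt_of_le_of_ne (hp i hi) (Ne.symm hpi)) (exp_pos _)⟩

lemma log_sum_mul_exp_mul_le_div_mul (hp : ∀ i ∈ s, 0 ≤ p i) (hp1 : ∑ i ∈ s, p i = 1)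
    (c : ι → ℝ) {u t : ℝ} (hu : 0 ≤ u) (hut : u ≤ t) :
    log (∑ i ∈ s, p i * exp (c i * u)) ≤ u / t * log (∑ i ∈ s, p i * exp (c i * t)) := by
  rcases hu.eq_or_lt with rfl | hu
  · simp [hp1]
  have ht : 0 < t := hu.trans_le hut
  set θ := u / t with hθ
  have hexp : ∀ i, exp (c i * u) = exp (c i * t) ^ θ := fun i => by
    rw [← exp_mul, hθ, mul_assoc, mul_div_cancel₀ u ht.ne']
  have jensen : ∑ i ∈ s, p i * exp (c i * t) ^ θ ≤ (∑ i ∈ s, p i * exp (c i * t)) ^ θ :=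
    (concaveOn_rpow (div_nonneg hu.le ht.le) ((div_le_one ht).2 hut)).le_map_sum hp hp1
      fun i _ => Set.mem_Ici.2 (exp_pos _).le
  have hpos := sum_mul_exp_pos hp hp1 fun i => c i * u
  simp only [hexp] at hpos ⊢
  calc log (∑ i ∈ s, p i * exp (c i * t) ^ θ)
      ≤ log ((∑ i ∈ s, p i * exp (c i * t)) ^ θ) := log_le_log hpos jensen
    _ = θ * log (∑ i ∈ s, p i * exp (c i * t)) := log_rpow (sum_mul_exp_pos hp hp1 _) _

lemma log_sum_mul_exp_mul_nonneg (hp : ∀ i ∈ s, 0 ≤ p i) (hp1 : ∑ i ∈ s, p i = 1)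
    {c : ι → ℝ} (hc : ∀ i ∈ s, 0 ≤ c i) {t : ℝ} (ht : 0 ≤ t) :
    0 ≤ log (∑ i ∈ s, p i * exp (c i * t)) := by
  refine log_nonneg (hp1 ▸ sum_le_sum fun i hi => ?_)
  exact le_mul_of_one_le_right (hp i hi) (one_le_exp (mul_nonneg (hc i hi) ht))

end LogSumExp

lemma sum_choose_mul_one_sub_pow_mul_pow (n : ℕ) (γ : ℝ) :
    ∑ ℓ ∈ range (n + 1), (n.choose ℓ : ℝ) * (1 - γ) ^ (n - ℓ) * γ ^ ℓ = 1 := by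
  have h := add_pow γ (1 - γ) n
  rw [add_sub_cancel, one_pow] at h
  exact (sum_congr rfl fun ℓ _ => by ring).trans h.symm

lemma natCast_mul_natCast_sub_one_nonneg (n : ℕ) : 0 ≤ (n : ℝ) * ((n : ℝ) - 1) := by
  rcases n with _ | n
  · simp
  · push_cast
    rw [add_sub_cancel_right]
    positivity

theorem sum_logSumExp_profile_le_general
    (α : ℕ) (γ σ Δ₂ Δinf : ℝ)
    (hγ0 : 0 ≤ γ) (hγ1 : γ ≤ 1)
    (F : ℝ → ℝ)
    (hF : ∀ u, F u = Real.log (∑ ℓ ∈ Finset.range (α + 1),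
      (α.choose ℓ : ℝ) * (1 - γ) ^ (α - ℓ) * γ ^ ℓ *
        Real.exp ((ℓ : ℝ) * ((ℓ : ℝ) - 1) * u / (2 * σ ^ 2))))
    (d : ℕ) (κ : Fin d → ℝ)
    (hκ2 : Real.sqrt (∑ j, κ j ^ 2) ≤ Δ₂)
    (hκinf : ∀ j, |κ j| ≤ Δinf) :
    ∑ j, F (κ j ^ 2) ≤ (Δ₂ ^ 2 / Δinf ^ 2) * F (Δinf ^ 2) := by
  set p : ℕ → ℝ := fun ℓ => (α.choose ℓ : ℝ) * (1 - γ) ^ (α - ℓ) * γ ^ ℓ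
  set c : ℕ → ℝ := fun ℓ => (ℓ : ℝ) * ((ℓ : ℝ) - 1) / (2 * σ ^ 2)
  have hF' : ∀ u, F u = log (∑ ℓ ∈ range (α + 1), p ℓ * exp (c ℓ * u)) := fun u => by
    rw [hF u]
    exact congrArg log (sum_congr rfl fun ℓ _ => by rw [mul_div_right_comm])
  have hp : ∀ ℓ ∈ range (α + 1), 0 ≤ p ℓ := fun ℓ _ => by
    have : 0 ≤ 1 - γ := sub_nonneg.2 hγ1
    positivity
  have hp1 : ∑ ℓ ∈ range (α + 1), p ℓ = 1 := sum_choose_mul_one_sub_pow_mul_pow α γ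
  have hc : ∀ ℓ ∈ range (α + 1), 0 ≤ c ℓ := fun ℓ _ =>
    div_nonneg (natCast_mul_natCast_sub_one_nonneg ℓ) (by positivity)
  have hFΔ : 0 ≤ F (Δinf ^ 2) := hF' _ ▸ log_sum_mul_exp_mul_nonneg hp hp1 hc (sq_nonneg _)
  have hκ2' : ∑ j, κ j ^ 2 ≤ Δ₂ ^ 2 := (sqrt_le_iff.1 hκ2).2
  calc ∑ j, F (κ j ^ 2) ≤ ∑ j, κ j ^ 2 / Δinf ^ 2 * F (Δinf ^ 2) := sum_le_sum fun j _ => by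
        rw [hF', hF']
        exact log_sum_mul_exp_mul_le_div_mul hp hp1 c (sq_nonneg _)
          (sq_abs (κ j) ▸ pow_le_pow_left₀ (abs_nonneg _) (hκinf j) 2)
    _ = (∑ j, κ j ^ 2) / Δinf ^ 2 * F (Δinf ^ 2) := by rw [← sum_mul, ← sum_div]
    _ ≤ Δ₂ ^ 2 / Δinf ^ 2 * F (Δinf ^ 2) := by gcongr

theorem sum_logSumExp_profile_le
    (α : ℕ) (hα : 2 ≤ α) (γ σ Δ₂ Δinf : ℝ)
    (hγ0 : 0 ≤ γ) (hγ1 : γ ≤ 1) (hσ : 0 < σ)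
    (hΔinf : 0 < Δinf) (hΔ : Δinf ≤ Δ₂)
    (F : ℝ → ℝ)
    (hF : ∀ u, F u = Real.log (∑ ℓ ∈ Finset.range (α + 1),
      (α.choose ℓ : ℝ) * (1 - γ) ^ (α - ℓ) * γ ^ ℓ *
        Real.exp ((ℓ : ℝ) * ((ℓ : ℝ) - 1) * u / (2 * σ ^ 2))))
    (d : ℕ) (κ : Fin d → ℝ)
    (hκ2 : Real.sqrt (∑ j, κ j ^ 2) ≤ Δ₂)
    (hκinf : ∀ j, |κ j| ≤ Δinf) :
    ∑ j, F (κ j ^ 2) ≤ (Δ₂ ^ 2 / Δinf ^ 2) * F (Δinf ^ 2) :=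
  sum_logSumExp_profile_le_general α γ σ Δ₂ Δinf hγ0 hγ1 F hF d κ hκ2 hκinf
end

section
/- Let g_1, …, g_n ∈ ℝ^d, let γ ∈ (0,1], let s_1, …, s_n be independent random vectors in {0,1}^d with i.i.d. Bernoulli(γ) coordinates, and let Z be an independent random vector in ℝ^d with i.i.d. N(0,σ²) coordinates. Define the estimator μ̂ = (1/(nγ)) · ( Σ_{i=1}^n g_i ⊙ s_i + Z ) and the true mean μ = (1/n) Σ_{i=1}^n g_i, where ⊙ denotes the coordinatewise product. Then μ̂ is unbiased, E[μ̂] = μ, and its mean squared error satisfies the exact identity E[ ‖μ̂ − μ‖_2² ] = d·σ²/(n²γ²) + ((1−γ)/(n²γ)) · Σ_{i=1}^n ‖g_i‖_2². -/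
/-!
Coordinate `j` of `μ̂` is `(nγ)⁻¹ X_j` with `X_j = ∑ i, g i j * s i j + Z j`, a sum of independent
terms. Since `E s i j = γ` and `E Z j = 0`, the estimator is unbiased, so its mean squared error is
the sum over `j` of `Var μ̂_j = (nγ)⁻² Var X_j`, and independence gives
`Var X_j = γ (1 - γ) ∑ i, g i j ^ 2 + σ ^ 2`.
-/

open MeasureTheory ProbabilityTheory Real
open scoped ENNReal NNReal Classical

/-- Bernoulli(γ) distribution on ℝ, supported on {0, 1}. -/
noncomputable def bern (γ : ℝ) : Measure ℝ :=
  ENNReal.ofReal γ • Measure.dirac 1 + ENNReal.ofReal (1 - γ) • Measure.dirac 0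

lemma integrable_bern (γ : ℝ) (f : ℝ → ℝ) : Integrable f (bern γ) :=
  ((integrable_dirac enorm_lt_top).smul_measure ENNReal.ofReal_ne_top).add_measure
    ((integrable_dirac enorm_lt_top).smul_measure ENNReal.ofReal_ne_top)

lemma integral_bern {γ : ℝ} (h0 : 0 ≤ γ) (h1 : γ ≤ 1) (f : ℝ → ℝ) :
    ∫ x, f x ∂bern γ = γ * f 1 + (1 - γ) * f 0 := by
  rw [bern, integral_add_measure, integral_smul_measure, integral_smul_measure, integral_dirac,
    integral_dirac, ENNReal.toReal_ofReal h0, ENNReal.toReal_ofReal (by linarith), smul_eq_mul,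
    smul_eq_mul]
  all_goals exact (integrable_dirac enorm_lt_top).smul_measure ENNReal.ofReal_ne_top

lemma isProbabilityMeasure_bern {γ : ℝ} (h0 : 0 ≤ γ) (h1 : γ ≤ 1) :
    IsProbabilityMeasure (bern γ) := by
  constructor
  simp only [bern, Measure.coe_add, Pi.add_apply, Measure.smul_apply, smul_eq_mul,
    measure_univ, mul_one]
  rw [← ENNReal.ofReal_add h0 (by linarith), add_sub_cancel, ENNReal.ofReal_one]

lemma memLp_id_bern (γ : ℝ) : MemLp id 2 (bern γ) :=
  (memLp_two_iff_integrable_sq aestronglyMeasurable_id).2 (integrable_bern γ _)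

lemma integral_id_bern {γ : ℝ} (h0 : 0 ≤ γ) (h1 : γ ≤ 1) : ∫ x, x ∂bern γ = γ := by
  simp [integral_bern h0 h1]

lemma variance_id_bern {γ : ℝ} (h0 : 0 ≤ γ) (h1 : γ ≤ 1) :
    Var[id; bern γ] = γ * (1 - γ) := by
  have := isProbabilityMeasure_bern h0 h1
  rw [variance_eq_sub (memLp_id_bern γ)]
  simp only [Pi.pow_apply, id_eq, integral_bern h0 h1]
  ring

section Product

variable {ι α β : Type*} [Fintype ι] [MeasurableSpace α] [MeasurableSpace β]
  {μ : Measure α} {ν : Measure β} [IsProbabilityMeasure μ] [IsProbabilityMeasure ν]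

lemma memLp_sum_mul_comp_eval (a : ι → ℝ) {f : α → ℝ} (hf : MemLp f 2 μ) :
    MemLp (fun x ↦ ∑ i, a i * f (x i)) 2 (Measure.pi fun _ ↦ μ) :=
  memLp_finsetSum _ fun i _ ↦
    (hf.comp_measurePreserving (measurePreserving_eval _ i)).const_mul (a i)

lemma integral_sum_mul_comp_eval (a : ι → ℝ) {f : α → ℝ} (hf : Integrable f μ) :
    ∫ x, ∑ i, a i * f (x i) ∂Measure.pi (fun _ ↦ μ) = (∑ i, a i) * ∫ y, f y ∂μ := by
  rw [integral_finsetSum _ fun i _ ↦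
    (integrable_comp_eval (μ := fun _ ↦ μ) hf).const_mul (a i), Finset.sum_mul]
  simp_rw [integral_const_mul, integral_comp_eval (μ := fun _ ↦ μ) hf.aestronglyMeasurable]

lemma variance_sum_mul_comp_eval (a : ι → ℝ) {f : α → ℝ} (hf : MemLp f 2 μ) :
    Var[fun x ↦ ∑ i, a i * f (x i); Measure.pi fun _ ↦ μ] = (∑ i, a i ^ 2) * Var[f; μ] := by
  have h := variance_sum_pi (μ := fun _ : ι ↦ μ) (X := fun i y ↦ a i * f y)
    fun i ↦ hf.const_mul (a i)
  rw [Finset.sum_fn] at h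
  simp_rw [h, variance_const_mul, Finset.sum_mul]

lemma memLp_add_comp_prod {f : α → ℝ} {h : β → ℝ} (hf : MemLp f 2 μ) (hh : MemLp h 2 ν) :
    MemLp (fun p ↦ f p.1 + h p.2) 2 (μ.prod ν) :=
  (hf.comp_fst ν).add (hh.comp_snd μ)

lemma integral_add_comp_prod {f : α → ℝ} {h : β → ℝ} (hf : Integrable f μ)
    (hh : Integrable h ν) : ∫ p, f p.1 + h p.2 ∂μ.prod ν = ∫ x, f x ∂μ + ∫ y, h y ∂ν := by
  rw [integral_add (hf.comp_fst ν) (hh.comp_snd μ), integral_fun_fst, integral_fun_snd]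
  simp

end Product

section Coordinates

variable {ι κ : Type*} [Fintype ι] [Fintype κ] {μ ν : Measure ℝ}
  [IsProbabilityMeasure μ] [IsProbabilityMeasure ν]

lemma memLp_eval_pi (hμ : MemLp id 2 μ) (j : κ) :
    MemLp (fun x ↦ x j) 2 (Measure.pi fun _ ↦ μ) :=
  hμ.comp_measurePreserving (measurePreserving_eval _ j)

lemma variance_eval_pi (j : κ) : Var[fun x ↦ x j; Measure.pi fun _ ↦ μ] = Var[id; μ] :=
  (measurePreserving_eval (fun _ : κ ↦ μ) j).variance_fun_comp (f := id) aemeasurable_id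

lemma memLp_sum_mul_eval_add_eval (a : ι → ℝ) (j : κ) (hμ : MemLp id 2 μ) (hν : MemLp id 2 ν) :
    MemLp (fun ω : (ι → κ → ℝ) × (κ → ℝ) ↦ ∑ i, a i * ω.1 i j + ω.2 j) 2
      ((Measure.pi fun _ : ι ↦ Measure.pi fun _ : κ ↦ μ).prod (Measure.pi fun _ : κ ↦ ν)) :=
  memLp_add_comp_prod (memLp_sum_mul_comp_eval a (memLp_eval_pi hμ j)) (memLp_eval_pi hν j)

lemma integral_sum_mul_eval_add_eval (a : ι → ℝ) (j : κ) (hμ : MemLp id 2 μ)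
    (hν : MemLp id 2 ν) :
    ∫ ω, ∑ i, a i * ω.1 i j + ω.2 j
        ∂(Measure.pi fun _ : ι ↦ Measure.pi fun _ : κ ↦ μ).prod (Measure.pi fun _ : κ ↦ ν)
      = (∑ i, a i) * ∫ x, x ∂μ + ∫ x, x ∂ν := by
  rw [integral_add_comp_prod
      (MemLp.integrable one_le_two (memLp_sum_mul_comp_eval a (memLp_eval_pi hμ j)))
      (MemLp.integrable one_le_two (memLp_eval_pi hν j)),
    integral_sum_mul_comp_eval a (f := fun w : κ → ℝ ↦ w j)
      (MemLp.integrable one_le_two (memLp_eval_pi hμ j)), integral_eval, integral_eval]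

lemma variance_sum_mul_eval_add_eval (a : ι → ℝ) (j : κ) (hμ : MemLp id 2 μ)
    (hν : MemLp id 2 ν) :
    Var[fun ω : (ι → κ → ℝ) × (κ → ℝ) ↦ ∑ i, a i * ω.1 i j + ω.2 j;
        (Measure.pi fun _ : ι ↦ Measure.pi fun _ : κ ↦ μ).prod (Measure.pi fun _ : κ ↦ ν)]
      = (∑ i, a i ^ 2) * Var[id; μ] + Var[id; ν] := by
  rw [variance_add_prod (memLp_sum_mul_comp_eval a (memLp_eval_pi hμ j)) (memLp_eval_pi hν j),
    variance_sum_mul_comp_eval a (f := fun w : κ → ℝ ↦ w j) (memLp_eval_pi hμ j),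
    variance_eval_pi, variance_eval_pi]

end Coordinates

lemma integral_sum_sq_sub_integral_eq_sum_variance {Ω ι : Type*} [MeasurableSpace Ω] [Fintype ι]
    {P : Measure Ω} [IsFiniteMeasure P] {X : Ω → ι → ℝ} (hX : ∀ j, MemLp (fun ω ↦ X ω j) 2 P) :
    ∫ ω, ∑ j, (X ω j - ∫ ω', X ω' j ∂P) ^ 2 ∂P = ∑ j, Var[fun ω ↦ X ω j; P] := by
  rw [integral_finsetSum (f := fun j ω ↦ (X ω j - ∫ ω', X ω' j ∂P) ^ 2) _
    fun j _ ↦ ((hX j).sub (memLp_const _)).integrable_sq]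
  exact Finset.sum_congr rfl fun j _ ↦ (variance_eq_integral (hX j).aemeasurable).symm

theorem csgm_estimator_unbiased_and_mse_identity_general
    (σ γ : ℝ) (hγ0 : 0 < γ) (hγ1 : γ ≤ 1)
    (d n : ℕ) (g : Fin n → Fin d → ℝ)
    (P : Measure ((Fin n → Fin d → ℝ) × (Fin d → ℝ)))
    (hP : P = (Measure.pi fun _ : Fin n => Measure.pi fun _ : Fin d => bern γ).prod
        (Measure.pi fun _ : Fin d => gaussianReal 0 (Real.toNNReal (σ ^ 2))))
    (μhat : (Fin n → Fin d → ℝ) × (Fin d → ℝ) → Fin d → ℝ)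
    (hμhat : ∀ ω j, μhat ω j = (1 / (n * γ)) * ((∑ i, g i j * ω.1 i j) + ω.2 j))
    (μbar : Fin d → ℝ) (hμbar : ∀ j, μbar j = (1 / (n : ℝ)) * ∑ i, g i j) :
    (∀ j, ∫ ω, μhat ω j ∂P = μbar j) ∧
    ∫ ω, ∑ j, (μhat ω j - μbar j) ^ 2 ∂P =
      d * σ ^ 2 / (n ^ 2 * γ ^ 2) + ((1 - γ) / (n ^ 2 * γ)) * ∑ i, ∑ j, g i j ^ 2 := by
  have := isProbabilityMeasure_bern hγ0.le hγ1
  have : IsProbabilityMeasure P := by rw [hP]; infer_instance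
  have hS := memLp_id_bern γ
  have hG := memLp_id_gaussianReal (μ := 0) (v := (σ ^ 2).toNNReal) 2
  have hμhat_eq (j : Fin d) : (fun ω ↦ μhat ω j)
      = fun ω ↦ 1 / (n * γ) * (∑ i, g i j * ω.1 i j + ω.2 j) := funext (hμhat · j)
  have hμhat_memLp (j : Fin d) : MemLp (fun ω ↦ μhat ω j) 2 P := by
    rw [hP, hμhat_eq j]
    exact (memLp_sum_mul_eval_add_eval (g · j) j hS hG).const_mul _
  have hmean (j : Fin d) : ∫ ω, μhat ω j ∂P = μbar j := by
    rw [hP, hμhat_eq j, integral_const_mul, integral_sum_mul_eval_add_eval (g · j) j hS hG,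
      integral_id_bern hγ0.le hγ1, integral_id_gaussianReal, add_zero, hμbar]
    field_simp
  refine ⟨hmean, ?_⟩
  simp_rw [← hmean]
  rw [integral_sum_sq_sub_integral_eq_sum_variance hμhat_memLp]
  simp_rw [hP, hμhat_eq, variance_const_mul, variance_sum_mul_eval_add_eval (g · _) _ hS hG,
    variance_id_bern hγ0.le hγ1, variance_id_gaussianReal, Real.coe_toNNReal _ (sq_nonneg σ)]
  rw [← Finset.mul_sum, Finset.sum_add_distrib, ← Finset.sum_mul, Finset.sum_comm,
    Finset.sum_const, Finset.card_univ, Fintype.card_fin, nsmul_eq_mul]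
  field_simp
  ring

theorem csgm_estimator_unbiased_and_mse_identity
    (σ γ : ℝ) (hγ0 : 0 < γ) (hγ1 : γ ≤ 1)
    (d n : ℕ) (hn : 0 < n) (g : Fin n → Fin d → ℝ)
    (P : Measure ((Fin n → Fin d → ℝ) × (Fin d → ℝ)))
    (hP : P = (Measure.pi fun _ : Fin n => Measure.pi fun _ : Fin d => bern γ).prod
        (Measure.pi fun _ : Fin d => gaussianReal 0 (Real.toNNReal (σ ^ 2))))
    (μhat : (Fin n → Fin d → ℝ) × (Fin d → ℝ) → Fin d → ℝ)
    (hμhat : ∀ ω j, μhat ω j = (1 / (n * γ)) * ((∑ i, g i j * ω.1 i j) + ω.2 j))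
    (μbar : Fin d → ℝ) (hμbar : ∀ j, μbar j = (1 / (n : ℝ)) * ∑ i, g i j) :
    (∀ j, ∫ ω, μhat ω j ∂P = μbar j) ∧
    ∫ ω, ∑ j, (μhat ω j - μbar j) ^ 2 ∂P =
      d * σ ^ 2 / (n ^ 2 * γ ^ 2) + ((1 - γ) / (n ^ 2 * γ)) * ∑ i, ∑ j, g i j ^ 2 :=
  csgm_estimator_unbiased_and_mse_identity_general σ γ hγ0 hγ1 d n g P hP μhat hμhat μbar hμbar
end

section
/- Let μ, ν, ρ be probability measures on ℝ^d and let α > 1. Then the Rényi divergence of order α is non-increasing under convolution with a common measure: D_α( μ ∗ ρ ‖ ν ∗ ρ ) ≤ D_α( μ ‖ ν ), where ∗ denotes the convolution of measures on the additive group ℝ^d. -/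
open MeasureTheory ProbabilityTheory Real
open scoped ENNReal NNReal Classical

/-- Convolution of two measures on `ℝ^d`: the pushforward of the product measure
under addition. -/
noncomputable def mconvAdd {d : ℕ} (μ ρ : Measure (Fin d → ℝ)) : Measure (Fin d → ℝ) :=
  (μ.prod ρ).map (fun p => p.1 + p.2)

/-! Convolution with `ρ` is the pushforward of `μ.prod ρ` under addition. A pushforward along `g`
cannot increase `∫ (dμ/dν)^α dν`: the density `d(g_*μ)/d(g_*ν) ∘ g` is the conditional expectation
of `dμ/dν` given `g`, so conditional Jensen for the convex map `t ↦ t^α` applies. Tensoring both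
measures with the same probability measure `ρ` does not change the density, hence neither the
divergence. -/

section DataProcessing

variable {𝓧 𝓨 : Type*} {m𝓧 : MeasurableSpace 𝓧} {m𝓨 : MeasurableSpace 𝓨}
  {μ ν : Measure 𝓧} {g : 𝓧 → 𝓨} {α : ℝ}

lemma integrable_toReal_rpow_rnDeriv (h : ∫⁻ x, μ.rnDeriv ν x ^ α ∂ν ≠ ∞) :
    Integrable (fun x ↦ (μ.rnDeriv ν x).toReal ^ α) ν := by
  simp_rw [ENNReal.toReal_rpow]
  exact integrable_toReal_of_lintegral_ne_top (by fun_prop) h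

lemma lintegral_rpow_rnDeriv_eq_ofReal_integral [SigmaFinite μ] (hα : 0 ≤ α)
    (h_int : Integrable (fun x ↦ (μ.rnDeriv ν x).toReal ^ α) ν) :
    ∫⁻ x, μ.rnDeriv ν x ^ α ∂ν = ENNReal.ofReal (∫ x, (μ.rnDeriv ν x).toReal ^ α ∂ν) := by
  rw [ofReal_integral_eq_lintegral_ofReal h_int (ae_of_all _ fun _ ↦ by positivity)]
  refine lintegral_congr_ae ?_
  filter_upwards [μ.rnDeriv_ne_top ν] with x hx
  rw [← ENNReal.ofReal_rpow_of_nonneg ENNReal.toReal_nonneg hα, ENNReal.ofReal_toReal hx]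

variable [IsFiniteMeasure μ] [IsFiniteMeasure ν]

lemma integrable_toReal_rpow_rnDeriv_map (hμν : μ ≪ ν) (hg : Measurable g) (hα : 1 ≤ α)
    (h_int : Integrable (fun x ↦ (μ.rnDeriv ν x).toReal ^ α) ν) :
    Integrable (fun y ↦ ((μ.map g).rnDeriv (ν.map g) y).toReal ^ α) (ν.map g) :=
  (convexOn_rpow hα).integrable_comp_rnDeriv_map hμν hg (by fun_prop)
    ((Real.continuous_rpow_const (by linarith)).continuousWithinAt) h_int

lemma integral_rpow_rnDeriv_map_le (hμν : μ ≪ ν) (hg : Measurable g) (hα : 1 ≤ α)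
    (h_int : Integrable (fun x ↦ (μ.rnDeriv ν x).toReal ^ α) ν) :
    ∫ y, ((μ.map g).rnDeriv (ν.map g) y).toReal ^ α ∂(ν.map g)
      ≤ ∫ x, (μ.rnDeriv ν x).toReal ^ α ∂ν := by
  rw [integral_map hg.aemeasurable
    ((Measurable.pow_const (by fun_prop) α).aestronglyMeasurable)]
  conv_rhs => rw [← integral_condExp hg.comap_le]
  exact integral_mono_ae
    ((integrable_toReal_rpow_rnDeriv_map hμν hg hα h_int).comp_measurable hg) integrable_condExp
    ((convexOn_rpow hα).comp_rnDeriv_map_le hμν hg (by fun_prop)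
      ((Real.continuous_rpow_const (by linarith)).continuousWithinAt) h_int)

lemma lintegral_rpow_rnDeriv_map_le (hμν : μ ≪ ν) (hg : Measurable g) (hα : 1 ≤ α) :
    ∫⁻ y, (μ.map g).rnDeriv (ν.map g) y ^ α ∂(ν.map g) ≤ ∫⁻ x, μ.rnDeriv ν x ^ α ∂ν := by
  by_cases h_top : ∫⁻ x, μ.rnDeriv ν x ^ α ∂ν = ∞
  · simp [h_top]
  have h_int := integrable_toReal_rpow_rnDeriv h_top
  rw [lintegral_rpow_rnDeriv_eq_ofReal_integral (by linarith)
      (integrable_toReal_rpow_rnDeriv_map hμν hg hα h_int),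
    lintegral_rpow_rnDeriv_eq_ofReal_integral (by linarith) h_int]
  exact ENNReal.ofReal_le_ofReal (integral_rpow_rnDeriv_map_le hμν hg hα h_int)

end DataProcessing

section RenyiDiv

variable {E F : Type*} [MeasurableSpace E] [MeasurableSpace F] {α : ℝ}

lemma lintegral_rpow_rnDeriv_prod_right (μ ν : Measure E) [IsFiniteMeasure μ] [IsFiniteMeasure ν]
    (ρ : Measure F) [IsProbabilityMeasure ρ] :
    ∫⁻ p, (μ.prod ρ).rnDeriv (ν.prod ρ) p ^ α ∂(ν.prod ρ) = ∫⁻ x, μ.rnDeriv ν x ^ α ∂ν := by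
  have h := rnDeriv_measure_compProd_left μ ν (Kernel.const E ρ)
  simp only [Measure.compProd_const] at h
  rw [lintegral_congr_ae (h.mono fun p hp ↦ by rw [hp]), lintegral_prod _ (by fun_prop)]
  simp

lemma renyiDiv_le_of_lintegral_rpow_rnDeriv_le {μ ν : Measure E} {μ' ν' : Measure F}
    (hα : 1 ≤ α) (hac : μ ≪ ν → μ' ≪ ν')
    (hle : μ ≪ ν → ∫⁻ y, μ'.rnDeriv ν' y ^ α ∂ν' ≤ ∫⁻ x, μ.rnDeriv ν x ^ α ∂ν) :
    renyiDiv α μ' ν' ≤ renyiDiv α μ ν := by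
  by_cases hμν : μ ≪ ν
  · rw [renyiDiv, renyiDiv, if_pos hμν, if_pos (hac hμν)]
    have h_coef : (0 : EReal) ≤ ((α - 1)⁻¹ : ℝ) :=
      EReal.coe_nonneg.mpr (inv_nonneg.mpr (by linarith))
    exact mul_le_mul_of_nonneg_left (ENNReal.log_monotone (hle hμν)) h_coef
  · simp [renyiDiv, hμν]

lemma renyiDiv_map_le (μ ν : Measure E) [IsFiniteMeasure μ] [IsFiniteMeasure ν] {g : E → F}
    (hg : Measurable g) (hα : 1 ≤ α) :
    renyiDiv α (μ.map g) (ν.map g) ≤ renyiDiv α μ ν :=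
  renyiDiv_le_of_lintegral_rpow_rnDeriv_le hα (·.map hg)
    (lintegral_rpow_rnDeriv_map_le · hg hα)

lemma renyiDiv_prod_right (μ ν : Measure E) [IsFiniteMeasure μ] [IsFiniteMeasure ν]
    (ρ : Measure F) [IsProbabilityMeasure ρ] :
    renyiDiv α (μ.prod ρ) (ν.prod ρ) = renyiDiv α μ ν := by
  have h_ac : μ.prod ρ ≪ ν.prod ρ ↔ μ ≪ ν := by
    simpa only [Measure.compProd_const] using
      Measure.absolutelyContinuous_compProd_left_iff (μ := μ) (ν := ν) (κ := Kernel.const E ρ)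
  simp only [renyiDiv, h_ac, lintegral_rpow_rnDeriv_prod_right]

end RenyiDiv

theorem renyiDiv_conv_le
    (d : ℕ) (μ ν ρ : Measure (Fin d → ℝ))
    [IsProbabilityMeasure μ] [IsProbabilityMeasure ν] [IsProbabilityMeasure ρ]
    (α : ℝ) (hα : 1 < α) :
    renyiDiv α (mconvAdd μ ρ) (mconvAdd ν ρ) ≤ renyiDiv α μ ν :=
  calc renyiDiv α (mconvAdd μ ρ) (mconvAdd ν ρ) ≤ renyiDiv α (μ.prod ρ) (ν.prod ρ) :=
        renyiDiv_map_le _ _ measurable_add hα.le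
    _ = renyiDiv α μ ν := renyiDiv_prod_right μ ν ρ
end
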